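/- Let D ⊂ ℂ be a bounded domain (or D ⊂ ℂⁿ restricted to a complex line L through a boundary point), u holomorphic on D and extending C^∞ to the closure, vanishing to exact finite order k at 0 ∈ ∂D, and f₁ holomorphic and bounded on D with u·f₁^N extending C^∞ to the closure for all N ≥ 1. Suppose there is a sequence p_j → 0 in D with f₁(p_j) → 0. Then for N > k, every derivative of order ≤ k of u·f₁^N (in the z₁-direction along L) vanishes at 0; in particular the Taylor expansion of u·f₁^N along L∩D at 0 is O(|z₁|^{k+1}). -/

import Mathlib

open Metric Bornology Asymptotics Filter Topology Nat

private lemma key_taylor :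
    ∀ (l : ℕ) (F : Type) [NormedAddCommGroup F] [NormedSpace ℝ F] (f : ℂ → F)
      (c : ℂ →L[ℝ] F), ContDiff ℝ (⊤ : ℕ∞) f →
      (∀ j, j < l → iteratedFDeriv ℝ j f 0 = 0) →
      (∀ v : Fin l → ℂ, iteratedFDeriv ℝ l f 0 v = c (∏ i, v i)) →
      ∃ C r : ℝ, 0 ≤ C ∧ 0 < r ∧
        ∀ z : ℂ, ‖z‖ ≤ r → ‖f z - (l ! : ℝ)⁻¹ • c (z ^ l)‖ ≤ C * ‖z‖ ^ (l + 1) := by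
  intro l
  induction l with
  | zero =>
    intro F _ _ f c hf _ hd
    obtain ⟨C, hC⟩ := (isCompact_closedBall (0 : ℂ) 1).exists_bound_of_continuousOn
      (hf.continuous_fderiv (by simp)).continuousOn
    refine ⟨max C 0, 1, le_max_right _ _, one_pos, fun z hz => ?_⟩
    have hf0 : f 0 = c 1 := by
      have := hd (fun _ => 1)
      simpa using this
    have hmvt := Convex.norm_image_sub_le_of_norm_hasFDerivWithin_le
      (f := f) (f' := fun w => fderiv ℝ f w) (s := closedBall (0 : ℂ) ‖z‖)
      (fun w _ => ((hf.differentiable (by simp)) w).hasFDerivAt.hasFDerivWithinAt)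
      (fun w hw => le_trans (hC w (closedBall_subset_closedBall hz hw)) (le_max_left C 0))
      (convex_closedBall _ _) (mem_closedBall_self (norm_nonneg z))
      (mem_closedBall_zero_iff.mpr le_rfl)
    simpa [hf0] using hmvt
  | succ l ih =>
    intro F _ _ f c hf h0 hd
    set c' : ℂ →L[ℝ] ℂ →L[ℝ] F :=
      ((ContinuousLinearMap.compL ℝ ℂ ℂ F) c).comp (ContinuousLinearMap.mul ℝ ℂ) with hc'
    have hc'app : ∀ a b : ℂ, c' a b = c (a * b) := fun a b => rfl
    have hf' : ContDiff ℝ (⊤ : ℕ∞) (fderiv ℝ f) := hf.fderiv_right (by simp)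
    have h0' : ∀ j, j < l → iteratedFDeriv ℝ j (fderiv ℝ f) 0 = 0 := by
      intro j hj
      apply ContinuousMultilinearMap.ext; intro v
      apply ContinuousLinearMap.ext; intro w
      have h1 : iteratedFDeriv ℝ (j + 1) f 0 (Fin.snoc v w) = 0 := by
        rw [h0 (j + 1) (by omega)]; rfl
      rw [iteratedFDeriv_succ_apply_right] at h1
      simpa using h1
    have hd' : ∀ v : Fin l → ℂ, iteratedFDeriv ℝ l (fderiv ℝ f) 0 v = c' (∏ i, v i) := by
      intro v
      apply ContinuousLinearMap.ext; intro w
      have h1 := hd (Fin.snoc v w)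
      rw [iteratedFDeriv_succ_apply_right] at h1
      simp only [Fin.init_snoc, Fin.snoc_last, Fin.prod_snoc] at h1
      rw [h1, hc'app]
    obtain ⟨C, r, hC0, hr, hbd⟩ := ih (ℂ →L[ℝ] F) (fderiv ℝ f) c' hf' h0' hd'
    refine ⟨C, r, hC0, hr, fun z hz => ?_⟩
    have hder : ∀ w : ℂ, HasFDerivAt (fun y => f y - ((l + 1)! : ℝ)⁻¹ • c (y ^ (l + 1)))
        (fderiv ℝ f w - (l ! : ℝ)⁻¹ • c' (w ^ l)) w := by
      intro w
      have h1 : HasFDerivAt (fun y : ℂ => y ^ (l + 1))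
          ((ContinuousLinearMap.smulRight (1 : ℂ →L[ℂ] ℂ)
            ((↑(l + 1) : ℂ) * w ^ l)).restrictScalars ℝ) w := by
        have h2 := hasDerivAt_pow (l + 1) w
        rw [hasDerivAt_iff_hasFDerivAt] at h2
        exact HasFDerivAt.restrictScalars ℝ h2
      have h2 := (c.hasFDerivAt.comp w h1).const_smul (((l + 1)! : ℝ)⁻¹)
      have h3 := ((hf.differentiable (by simp)) w).hasFDerivAt.sub h2
      have heq : fderiv ℝ f w - (l ! : ℝ)⁻¹ • c' (w ^ l) =
          fderiv ℝ f w - ((l + 1)! : ℝ)⁻¹ •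
            (c.comp ((ContinuousLinearMap.smulRight (1 : ℂ →L[ℂ] ℂ)
              ((↑(l + 1) : ℂ) * w ^ l)).restrictScalars ℝ)) := by
        congr 1
        apply ContinuousLinearMap.ext; intro t
        have ht : t • ((↑(l + 1) : ℂ) * w ^ l) = ((l + 1 : ℕ) : ℝ) • (w ^ l * t) := by
          push_cast [Complex.real_smul]
          simp [smul_eq_mul]
          ring
        simp only [ContinuousLinearMap.smul_apply, ContinuousLinearMap.coe_comp',
          Function.comp_apply, ContinuousLinearMap.coe_restrictScalars',
          ContinuousLinearMap.smulRight_apply, ContinuousLinearMap.one_apply, hc'app]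
        rw [ht, map_smul, smul_smul]
        congr 1
        rw [Nat.factorial_succ]
        have hlf : (0:ℝ) < (l ! : ℝ) := by positivity
        push_cast
        field_simp
      rw [heq]
      exact h3
    have hf0 : f 0 = 0 := by
      have h := h0 0 (Nat.succ_pos l)
      calc f 0 = iteratedFDeriv ℝ 0 f 0 (fun _ => 0) := (iteratedFDeriv_zero_apply _).symm
        _ = 0 := by rw [h]; rfl
    have hmvt := Convex.norm_image_sub_le_of_norm_hasFDerivWithin_le
      (f := fun y => f y - ((l + 1)! : ℝ)⁻¹ • c (y ^ (l + 1)))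
      (f' := fun w => fderiv ℝ f w - (l ! : ℝ)⁻¹ • c' (w ^ l))
      (s := closedBall (0 : ℂ) ‖z‖)
      (fun w _ => (hder w).hasFDerivWithinAt)
      (fun w hw => by
        have hwz : ‖w‖ ≤ ‖z‖ := mem_closedBall_zero_iff.mp hw
        calc ‖fderiv ℝ f w - (l ! : ℝ)⁻¹ • c' (w ^ l)‖ ≤ C * ‖w‖ ^ (l + 1) :=
              hbd w (hwz.trans hz)
          _ ≤ C * ‖z‖ ^ (l + 1) := by
              apply mul_le_mul_of_nonneg_left _ hC0
              exact pow_le_pow_left₀ (norm_nonneg _) hwz _)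
      (convex_closedBall _ _) (mem_closedBall_self (norm_nonneg z))
      (mem_closedBall_zero_iff.mpr le_rfl)
    have hz0 : ((0:ℂ) ^ (l + 1)) = 0 := by simp
    simp only [hf0, hz0, map_zero, smul_zero, sub_zero] at hmvt
    calc ‖f z - ((l + 1)! : ℝ)⁻¹ • c (z ^ (l + 1))‖
        ≤ C * ‖z‖ ^ (l + 1) * ‖z‖ := hmvt
      _ = C * ‖z‖ ^ (l + 1 + 1) := by ring

private lemma holo_diag {s : Set ℂ} (hs : IsOpen s) {h : ℂ → ℂ}
    (hh : DifferentiableOn ℂ h s) {q : ℂ} (hq : q ∈ s) (l : ℕ) (v : Fin l → ℂ) :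
    iteratedFDerivWithin ℝ l h s q v
      = (∏ i, v i) • iteratedFDerivWithin ℝ l h s q (fun _ => 1) := by
  have hA : AnalyticOnNhd ℂ h s := hh.analyticOnNhd hs
  have hC : ContDiffOn ℂ (⊤ : ℕ∞) h s := hA.contDiffOn hs.uniqueDiffOn
  have hT := (hC.ftaylorSeriesWithin hs.uniqueDiffOn).restrictScalars ℝ
  have heq := hT.eq_iteratedFDerivWithin_of_uniqueDiffOn (m := l)
      (by exact_mod_cast le_top) hs.uniqueDiffOn hq
  rw [← heq]
  have hms := (ftaylorSeriesWithin ℂ h s q l).map_smul_univ v (fun _ => (1 : ℂ))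
  simpa using hms

theorem stmt_18 (D : Set ℂ)
    (hDo : IsOpen D) (hDc : IsConnected D) (hDb : IsBounded D)
    (h0 : (0 : ℂ) ∈ frontier D)
    (k : ℕ)
    -- u is holomorphic on D and extends C^∞ to the closure (given by a global smooth function)
    (u : ℂ → ℂ) (hu_hol : DifferentiableOn ℂ u D) (hu_smooth : ContDiff ℝ (⊤ : ℕ∞) u)
    -- u vanishes to exact finite order k at 0 ∈ ∂D
    (hu_van : ∀ j : ℕ, j < k → iteratedFDeriv ℝ j u 0 = 0)
    (hu_exact : iteratedFDeriv ℝ k u 0 ≠ 0)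
    -- f₁ is holomorphic and bounded on D
    (f₁ : ℂ → ℂ) (hf₁ : DifferentiableOn ℂ f₁ D)
    (B : ℝ) (hB : ∀ z ∈ D, ‖f₁ z‖ ≤ B)
    -- u·f₁^N extends C^∞ to the closure for all N ≥ 1
    (hext : ∀ N : ℕ, 1 ≤ N → ∃ g : ℂ → ℂ, ContDiff ℝ (⊤ : ℕ∞) g ∧
      Set.EqOn g (fun z => u z * f₁ z ^ N) D)
    -- a sequence p_j → 0 in D along which f₁ → 0
    (p : ℕ → ℂ) (hp : ∀ j, p j ∈ D) (hp0 : Tendsto p atTop (nhds 0))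
    (hfp : Tendsto (fun j => f₁ (p j)) atTop (nhds 0)) :
    ∀ N : ℕ, k < N →
      (∀ g : ℂ → ℂ, ContDiff ℝ (⊤ : ℕ∞) g → Set.EqOn g (fun z => u z * f₁ z ^ N) D →
        ∀ j : ℕ, j ≤ k → iteratedFDeriv ℝ j g 0 = 0) ∧
      (fun z => u z * f₁ z ^ N) =O[nhdsWithin 0 D] fun z => z ^ (k + 1) := by
  intro N hN
  have hN1 : 1 ≤ N := Nat.one_le_iff_ne_zero.mpr (by omega)
  have hh : DifferentiableOn ℂ (fun z => u z * f₁ z ^ N) D := hu_hol.mul (hf₁.pow N)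
  have h0D : (0 : ℂ) ∉ D := fun hmem => h0.2 (by rwa [hDo.interior_eq])
  have hpne : ∀ j, p j ≠ 0 := fun j hj => h0D (hj ▸ hp j)
  have hnorm : Tendsto (fun j => ‖p j‖) atTop (𝓝 0) := by simpa using hp0.norm
  -- bound on u near 0
  have hubd : ∃ Cu ru : ℝ, 0 ≤ Cu ∧ 0 < ru ∧ ∀ z : ℂ, ‖z‖ ≤ ru → ‖u z‖ ≤ Cu * ‖z‖ ^ k := by
    match k, hu_van with
    | 0, _ =>
      obtain ⟨C, hC⟩ := (isCompact_closedBall (0 : ℂ) 1).exists_bound_of_continuousOn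
        (hu_smooth.continuous.continuousOn)
      exact ⟨max C 0, 1, le_max_right _ _, one_pos, fun z hz => by
        simpa using le_trans (hC z (mem_closedBall_zero_iff.mpr hz)) (le_max_left C 0)⟩
    | (m + 1), hu_van =>
      obtain ⟨C, r, hC0, hr, hbd⟩ := key_taylor m ℂ u 0 hu_smooth
        (fun j hj => hu_van j (by omega))
        (fun v => by rw [hu_van m (by omega)]; simp)
      exact ⟨C, r, hC0, hr, fun z hz => by simpa using hbd z hz⟩
  obtain ⟨Cu, ru, hCu0, hru, hCu⟩ := hubd
  have part1 : ∀ g : ℂ → ℂ, ContDiff ℝ (⊤ : ℕ∞) g → Set.EqOn g (fun z => u z * f₁ z ^ N) D →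
      ∀ j : ℕ, j ≤ k → iteratedFDeriv ℝ j g 0 = 0 := by
    intro g hg hge
    have hgid : ∀ (l : ℕ) (q : ℂ), q ∈ D →
        iteratedFDeriv ℝ l g q = iteratedFDerivWithin ℝ l (fun z => u z * f₁ z ^ N) D q := by
      intro l q hq
      rw [← iteratedFDerivWithin_of_isOpen l hDo hq]
      exact iteratedFDerivWithin_congr hge hq l
    have hdiag0 : ∀ l : ℕ, ∀ v : Fin l → ℂ,
        iteratedFDeriv ℝ l g 0 v = (∏ i, v i) • iteratedFDeriv ℝ l g 0 (fun _ => 1) := by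
      intro l v
      have htend : Tendsto (fun j => iteratedFDeriv ℝ l g (p j)) atTop
          (𝓝 (iteratedFDeriv ℝ l g 0)) :=
        ((hg.continuous_iteratedFDeriv (by exact_mod_cast le_top)).tendsto 0).comp hp0
      have hv : Tendsto (fun j => iteratedFDeriv ℝ l g (p j) v) atTop
          (𝓝 (iteratedFDeriv ℝ l g 0 v)) :=
        by
          have hcont : Continuous fun (M : ContinuousMultilinearMap ℝ (fun _ : Fin l => ℂ) ℂ) =>
              M v := continuous_eval_const v
          exact (hcont.tendsto _).comp htend
      have h1 : Tendsto (fun j => iteratedFDeriv ℝ l g (p j) (fun _ => (1:ℂ))) atTop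
          (𝓝 (iteratedFDeriv ℝ l g 0 (fun _ => 1))) :=
        by
          have hcont : Continuous fun (M : ContinuousMultilinearMap ℝ (fun _ : Fin l => ℂ) ℂ) =>
              M (fun _ => 1) := continuous_eval_const _
          exact (hcont.tendsto _).comp htend
      have h2 : Tendsto (fun j => (∏ i, v i) • iteratedFDeriv ℝ l g (p j) (fun _ => (1:ℂ)))
          atTop (𝓝 ((∏ i, v i) • iteratedFDeriv ℝ l g 0 (fun _ => 1))) := h1.const_smul _
      have heq2 : (fun j => iteratedFDeriv ℝ l g (p j) v)
          = fun j => (∏ i, v i) • iteratedFDeriv ℝ l g (p j) (fun _ => (1:ℂ)) := by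
        funext j
        rw [hgid l (p j) (hp j)]
        exact holo_diag hDo hh (hp j) l v
      exact tendsto_nhds_unique (heq2 ▸ hv) h2
    have main : ∀ l : ℕ, l ≤ k → iteratedFDeriv ℝ l g 0 = 0 := by
      intro l
      induction l using Nat.strong_induction_on with
      | _ l ih =>
        intro hlk
        set a : ℂ := iteratedFDeriv ℝ l g 0 (fun _ => (1 : ℂ)) with ha
        have hcapp : ∀ x : ℂ, (a • ContinuousLinearMap.id ℝ ℂ) x = a * x := fun x => rfl
        obtain ⟨C, r, hC0, hr, hbd⟩ := key_taylor l ℂ g (a • ContinuousLinearMap.id ℝ ℂ) hg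
          (fun j hj => ih j hj (le_trans hj.le hlk))
          (fun v => by rw [hdiag0 l v, hcapp]; simp [smul_eq_mul]; ring)
        have ha0 : a = 0 := by
          have hfact : (0 : ℝ) < (l ! : ℝ)⁻¹ := by positivity
          set ρ : ℝ := min r (min ru 1) with hρdef
          have hρ : 0 < ρ := by
            simp only [hρdef, lt_min_iff]
            exact ⟨hr, hru, one_pos⟩
          have hev : ∀ᶠ j in atTop, (l ! : ℝ)⁻¹ * ‖a‖ ≤ Cu * ‖f₁ (p j)‖ ^ N + C * ‖p j‖ := by
            filter_upwards [hnorm.eventually_le_const hρ] with j hj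
            have hjr : ‖p j‖ ≤ r := hj.trans (min_le_left _ _)
            have hjru : ‖p j‖ ≤ ru := hj.trans ((min_le_right _ _).trans (min_le_left _ _))
            have hj1 : ‖p j‖ ≤ 1 := hj.trans ((min_le_right _ _).trans (min_le_right _ _))
            have h1 := hbd (p j) hjr
            rw [hcapp] at h1
            have h2 : ‖(l ! : ℝ)⁻¹ • (a * (p j) ^ l)‖ ≤ ‖g (p j)‖ + C * ‖p j‖ ^ (l + 1) := by
              rw [(sub_sub_cancel (g (p j)) ((l ! : ℝ)⁻¹ • (a * (p j) ^ l))).symm]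
              exact (norm_sub_le _ _).trans (by gcongr)
            have h4 : ‖g (p j)‖ ≤ Cu * ‖f₁ (p j)‖ ^ N * ‖p j‖ ^ l := by
              rw [hge (hp j)]
              simp only [norm_mul, norm_pow]
              calc ‖u (p j)‖ * ‖f₁ (p j)‖ ^ N ≤ (Cu * ‖p j‖ ^ k) * ‖f₁ (p j)‖ ^ N := by
                    gcongr
                    exact hCu _ hjru
                _ ≤ (Cu * ‖p j‖ ^ l) * ‖f₁ (p j)‖ ^ N := by
                    refine mul_le_mul_of_nonneg_right (mul_le_mul_of_nonneg_left ?_ hCu0)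
                      (pow_nonneg (norm_nonneg _) _)
                    exact pow_le_pow_of_le_one (norm_nonneg _) hj1 hlk
                _ = Cu * ‖f₁ (p j)‖ ^ N * ‖p j‖ ^ l := by ring
            have h5 : ((l ! : ℝ)⁻¹ * ‖a‖) * ‖p j‖ ^ l
                ≤ (Cu * ‖f₁ (p j)‖ ^ N + C * ‖p j‖) * ‖p j‖ ^ l := by
              have hlhs : ‖(l ! : ℝ)⁻¹ • (a * (p j) ^ l)‖
                  = ((l ! : ℝ)⁻¹ * ‖a‖) * ‖p j‖ ^ l := by
                rw [norm_smul, norm_mul, norm_pow, Real.norm_eq_abs, abs_of_pos hfact]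
                ring
              calc ((l ! : ℝ)⁻¹ * ‖a‖) * ‖p j‖ ^ l
                  = ‖(l ! : ℝ)⁻¹ • (a * (p j) ^ l)‖ := hlhs.symm
                _ ≤ ‖g (p j)‖ + C * ‖p j‖ ^ (l + 1) := h2
                _ ≤ Cu * ‖f₁ (p j)‖ ^ N * ‖p j‖ ^ l + C * ‖p j‖ ^ (l + 1) :=
                    add_le_add_left h4 _
                _ = (Cu * ‖f₁ (p j)‖ ^ N + C * ‖p j‖) * ‖p j‖ ^ l := by ring
            have hppos : (0 : ℝ) < ‖p j‖ ^ l :=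
              pow_pos (norm_pos_iff.mpr (hpne j)) l
            exact le_of_mul_le_mul_right h5 hppos
          have hlim : Tendsto (fun j => Cu * ‖f₁ (p j)‖ ^ N + C * ‖p j‖) atTop (𝓝 0) := by
            have hfn : Tendsto (fun j => ‖f₁ (p j)‖) atTop (𝓝 0) := by simpa using hfp.norm
            have hfn2 : Tendsto (fun j => ‖f₁ (p j)‖ ^ N) atTop (𝓝 0) := by
              have := hfn.pow N
              simpa [zero_pow (by omega : N ≠ 0)] using this
            have := (hfn2.const_mul Cu).add (hnorm.const_mul C)
            simpa using this
          have hle : (l ! : ℝ)⁻¹ * ‖a‖ ≤ 0 := ge_of_tendsto hlim hev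
          have : ‖a‖ ≤ 0 := by
            by_contra hcon
            push_neg at hcon
            nlinarith
          simpa using norm_le_zero_iff.mp this
        apply ContinuousMultilinearMap.ext
        intro v
        rw [hdiag0 l v, ← ha, ha0]
        simp
    exact main
  refine ⟨part1, ?_⟩
  obtain ⟨g, hg, hge⟩ := hext N hN1
  have hvan := part1 g hg hge
  obtain ⟨C, r, hC0, hr, hbd⟩ := key_taylor k ℂ g 0 hg
    (fun j hj => hvan j hj.le)
    (fun v => by rw [hvan k le_rfl]; simp)
  rw [Asymptotics.isBigO_iff]
  refine ⟨C, ?_⟩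
  have hev : ∀ᶠ z in 𝓝 (0 : ℂ), ‖z‖ ≤ r := by
    filter_upwards [Metric.closedBall_mem_nhds (0 : ℂ) hr] with z hz
    exact mem_closedBall_zero_iff.mp hz
  filter_upwards [self_mem_nhdsWithin, hev.filter_mono nhdsWithin_le_nhds] with z hzD hzr
  have := hbd z hzr
  simp only [map_zero, ContinuousLinearMap.zero_apply, smul_zero, sub_zero] at this
  have hgz : g z = u z * f₁ z ^ N := hge hzD
  rw [← hgz]
  simpa [norm_pow] using this
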